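/- arXiv:2407.20044 — 2 statements merged into one kernel-verified Lean document; each statement's English description precedes it below -/
import Mathlib

section
/- A matrix pair (E, A) of n×n real matrices is regular (i.e., the polynomial det(sE − A) is not the zero polynomial) if and only if there exist invertible real matrices S and T such that S·E·T = [[I, 0], [0, N]] and S·A·T = [[J, 0], [0, I]] in block form, where N is a nilpotent square matrix and J is a square matrix. -/
/-!
Choose `c` with `Q = c • E - A` invertible. Multiplying by `Q⁻¹` turns `(E, A)` into
`(M, c • M - 1)` with `M = Q⁻¹ * E`, and the Fitting decomposition of `M` makes it similar to
`diag(M₁, M₂)` with `M₁` invertible and `M₂` nilpotent. Multiplying on the left by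
`diag(M₁⁻¹, (c • M₂ - 1)⁻¹)` (the second block is invertible since `M₂` is nilpotent) yields
`(diag(1, N), diag(J, 1))` with `N = (c • M₂ - 1)⁻¹ * M₂`, nilpotent because its factors commute.

Conversely, in the normal form `det (s • E - A)` is a unit multiple of
`det (s • 1 - J) * det (s • N - 1)`; the second factor never vanishes, and the first is the
characteristic polynomial of `J`, which is nonzero at some real `s`.
-/

open Matrix

/-- A matrix pair `(E, A)` is regular if `det (s•E - A)` is not the zero polynomial,
equivalently (over the infinite field `ℝ`) it is nonzero for some `s`. -/
def IsRegularPair {n : ℕ} (E A : Matrix (Fin n) (Fin n) ℝ) : Prop :=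
  ∃ s : ℝ, (s • E - A).det ≠ 0

theorem LinearMap.exists_isCompl_isNilpotent_restrict_isUnit_restrict {R M : Type*} [Ring R]
    [AddCommGroup M] [Module R M] [IsArtinian R M] [IsNoetherian R M] (f : Module.End R M) :
    ∃ (p q : Submodule R M) (hp : ∀ x ∈ p, f x ∈ p) (hq : ∀ x ∈ q, f x ∈ q),
      IsCompl p q ∧ IsNilpotent (f.restrict hp) ∧ IsUnit (f.restrict hq) := by
  obtain ⟨k, hk⟩ := Filter.eventually_atTop.mp <| f.eventually_isCompl_ker_pow_range_pow.and <|
    f.eventually_iSup_ker_pow_eq.and f.eventually_iInf_range_pow_eq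
  obtain ⟨hcompl, hker, hrange⟩ := hk k le_rfl
  obtain ⟨-, hker', hrange'⟩ := hk (k + 1) k.le_succ
  have hcomm : Commute f (f ^ k) := (Commute.refl f).pow_right k
  have hp : ∀ x ∈ LinearMap.ker (f ^ k), f x ∈ LinearMap.ker (f ^ k) := fun x hx ↦ by
    rw [LinearMap.mem_ker, ← Module.End.mul_apply, ← hcomm.eq, Module.End.mul_apply,
      LinearMap.mem_ker.1 hx, map_zero]
  have hq : ∀ x ∈ LinearMap.range (f ^ k), f x ∈ LinearMap.range (f ^ k) := by
    rintro _ ⟨y, rfl⟩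
    exact ⟨f y, by rw [← Module.End.mul_apply, ← hcomm.eq, Module.End.mul_apply]⟩
  refine ⟨_, _, hp, hq, hcompl, ⟨k, ?_⟩, (Module.End.isUnit_iff _).2 ⟨?_, ?_⟩⟩
  · ext ⟨x, hx⟩
    rw [Module.End.pow_restrict]
    exact hx
  · rw [← LinearMap.ker_eq_bot, Submodule.eq_bot_iff]
    rintro ⟨x, hx⟩ hfx
    have hfx : f x = 0 := congrArg Subtype.val hfx
    -- `ker f ⊆ ker f ^ (k + 1) = ker f ^ k`, which meets `range f ^ k` trivially
    have hxk : x ∈ LinearMap.ker (f ^ k) := by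
      rw [hker.symm.trans hker', LinearMap.mem_ker, pow_succ, Module.End.mul_apply, hfx, map_zero]
    exact Subtype.ext (Submodule.disjoint_def.1 hcompl.disjoint x hxk hx)
  · rintro ⟨y, hy⟩
    obtain ⟨z, rfl⟩ := (hrange.symm.trans hrange') ▸ hy
    exact ⟨⟨(f ^ k) z, z, rfl⟩, Subtype.ext (by simp [pow_succ'])⟩

theorem LinearMap.toMatrix_reindex {R M ι ι' : Type*} [CommSemiring R] [AddCommMonoid M]
    [Module R M] [Fintype ι] [Fintype ι'] [DecidableEq ι] [DecidableEq ι'] (b : Module.Basis ι R M)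
    (e : ι ≃ ι') (f : Module.End R M) :
    LinearMap.toMatrix (b.reindex e) (b.reindex e) f = reindex e e (LinearMap.toMatrix b b f) := by
  ext i j
  simp [LinearMap.toMatrix_apply]

namespace Matrix

section BlockDiagFin

variable {R : Type*} {n₁ n₂ n : ℕ} (h : n₁ + n₂ = n)

def blockDiagFin [Zero R] (X : Matrix (Fin n₁) (Fin n₁) R) (Y : Matrix (Fin n₂) (Fin n₂) R) :
    Matrix (Fin n) (Fin n) R :=
  reindex (finSumFinEquiv.trans (finCongr h)) (finSumFinEquiv.trans (finCongr h))
    (fromBlocks X 0 0 Y)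

theorem blockDiagFin_mul [Semiring R] (X X' : Matrix (Fin n₁) (Fin n₁) R)
    (Y Y' : Matrix (Fin n₂) (Fin n₂) R) :
    blockDiagFin h X Y * blockDiagFin h X' Y' = blockDiagFin h (X * X') (Y * Y') := by
  simp only [blockDiagFin, reindex_apply, submatrix_mul_equiv, fromBlocks_multiply]
  simp

theorem blockDiagFin_one [Semiring R] :
    blockDiagFin h (1 : Matrix (Fin n₁) (Fin n₁) R) 1 = 1 := by
  simp only [blockDiagFin, reindex_apply, fromBlocks_one, submatrix_one_equiv]

theorem smul_blockDiagFin [Semiring R] (c : R) (X : Matrix (Fin n₁) (Fin n₁) R)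
    (Y : Matrix (Fin n₂) (Fin n₂) R) :
    c • blockDiagFin h X Y = blockDiagFin h (c • X) (c • Y) := by
  simp only [blockDiagFin, ← coe_reindexLinearEquiv R R, ← map_smul, fromBlocks_smul, smul_zero]

theorem blockDiagFin_sub [Ring R] (X X' : Matrix (Fin n₁) (Fin n₁) R)
    (Y Y' : Matrix (Fin n₂) (Fin n₂) R) :
    blockDiagFin h X Y - blockDiagFin h X' Y' = blockDiagFin h (X - X') (Y - Y') := by
  simp only [blockDiagFin, ← coe_reindexLinearEquiv R R, ← map_sub]
  congr 1
  ext (i | i) (j | j) <;> simp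

theorem det_blockDiagFin [CommRing R] (X : Matrix (Fin n₁) (Fin n₁) R)
    (Y : Matrix (Fin n₂) (Fin n₂) R) :
    (blockDiagFin h X Y).det = X.det * Y.det := by
  rw [blockDiagFin, det_reindex_self, det_fromBlocks_zero₂₁]

theorem isUnit_blockDiagFin [CommRing R] {X : Matrix (Fin n₁) (Fin n₁) R}
    {Y : Matrix (Fin n₂) (Fin n₂) R} (hX : IsUnit X) (hY : IsUnit Y) :
    IsUnit (blockDiagFin h X Y) := by
  rw [isUnit_iff_isUnit_det, det_blockDiagFin]
  exact ((isUnit_iff_isUnit_det X).1 hX).mul ((isUnit_iff_isUnit_det Y).1 hY)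

end BlockDiagFin

theorem exists_isUnit_mul_eq_mul_blockDiagFin {K : Type*} [Field K] {n : ℕ}
    (M : Matrix (Fin n) (Fin n) K) :
    ∃ (n₁ n₂ : ℕ) (h : n₁ + n₂ = n) (T : Matrix (Fin n) (Fin n) K)
      (M₁ : Matrix (Fin n₁) (Fin n₁) K) (M₂ : Matrix (Fin n₂) (Fin n₂) K),
      IsUnit T ∧ IsUnit M₁ ∧ IsNilpotent M₂ ∧ M * T = T * blockDiagFin h M₁ M₂ := by
  set f := toLin' M
  obtain ⟨p, q, hp, hq, hpq, hnil, hunit⟩ := f.exists_isCompl_isNilpotent_restrict_isUnit_restrict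
  let bq := Module.finBasis K q
  let bp := Module.finBasis K p
  have h : Module.finrank K q + Module.finrank K p = n := by
    rw [Submodule.finrank_add_eq_of_isCompl hpq.symm, Module.finrank_fin_fun]
  let g := q.prodEquivOfIsCompl p hpq.symm
  let B := ((bq.prod bp).map g).reindex (finSumFinEquiv.trans (finCongr h))
  have hg : g.symm.toLinearMap ∘ₗ f ∘ₗ g.toLinearMap = (f.restrict hq).prodMap (f.restrict hp) := by
    refine LinearMap.ext fun v ↦ ?_
    rw [LinearMap.comp_apply, LinearMap.comp_apply, LinearEquiv.coe_coe, LinearEquiv.coe_coe,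
      LinearEquiv.symm_apply_eq]
    simp [f, g, Submodule.coe_prodEquivOfIsCompl', mulVec_add]
  have hB : LinearMap.toMatrix B B f = blockDiagFin h
      (LinearMap.toMatrix bq bq (f.restrict hq)) (LinearMap.toMatrix bp bp (f.restrict hp)) := by
    rw [LinearMap.toMatrix_reindex, LinearMap.toMatrix_map_left, LinearMap.toMatrix_map_right,
      hg, LinearMap.toMatrix_prodMap]
    rfl
  let std := Pi.basisFun K (Fin n)
  refine ⟨_, _, h, std.toMatrix B, LinearMap.toMatrix bq bq (f.restrict hq),
    LinearMap.toMatrix bp bp (f.restrict hp), @isUnit_of_invertible _ _ _ (std.invertibleToMatrix B),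
    hunit.map (LinearMap.toMatrixAlgEquiv bq), hnil.map (LinearMap.toMatrixAlgEquiv bp), ?_⟩
  rw [← hB, basis_toMatrix_mul_linearMap_toMatrix,
    ← linearMap_toMatrix_mul_basis_toMatrix (b' := std) (c' := std),
    LinearMap.toMatrix_eq_toMatrix', LinearMap.toMatrix'_toLin']

section StrictlyEquivalent

variable {R ι : Type*} [Fintype ι] [DecidableEq ι]

def StrictlyEquivalent [Semiring R] (E A E' A' : Matrix ι ι R) : Prop :=
  ∃ S T : Matrix ι ι R, IsUnit S ∧ IsUnit T ∧ S * E * T = E' ∧ S * A * T = A'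

theorem StrictlyEquivalent.trans [Semiring R] {E A E' A' E'' A'' : Matrix ι ι R}
    (h : StrictlyEquivalent E A E' A') (h' : StrictlyEquivalent E' A' E'' A'') :
    StrictlyEquivalent E A E'' A'' := by
  obtain ⟨S, T, hS, hT, rfl, rfl⟩ := h
  obtain ⟨S', T', hS', hT', rfl, rfl⟩ := h'
  exact ⟨S' * S, T * T', hS'.mul hS, hT.mul hT', by noncomm_ring, by noncomm_ring⟩

variable [CommRing R]

theorem StrictlyEquivalent.det_smul_sub_ne_zero {E A E' A' : Matrix ι ι R}
    (h : StrictlyEquivalent E A E' A') {s : R} (hs : (s • E' - A').det ≠ 0) :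
    (s • E - A).det ≠ 0 := by
  obtain ⟨S, T, -, -, rfl, rfl⟩ := h
  have hST : S * (s • E - A) * T = s • (S * E * T) - S * A * T := by
    rw [Matrix.mul_sub, Matrix.sub_mul, mul_smul_comm, smul_mul_assoc]
  rw [← hST, det_mul, det_mul] at hs
  exact fun h0 ↦ hs (by rw [h0, mul_zero, zero_mul])

theorem strictlyEquivalent_inv_mul {E A : Matrix ι ι R} (c : R) (hQ : IsUnit (c • E - A)) :
    StrictlyEquivalent E A ((c • E - A)⁻¹ * E) (c • ((c • E - A)⁻¹ * E) - 1) := by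
  refine ⟨(c • E - A)⁻¹, 1, isUnit_nonsing_inv_iff.2 hQ, isUnit_one, mul_one _, ?_⟩
  have hinv : (c • E - A)⁻¹ * (c • E - A) = 1 :=
    nonsing_inv_mul _ ((isUnit_iff_isUnit_det _).1 hQ)
  rw [mul_one, ← mul_smul_comm, ← hinv, ← Matrix.mul_sub, sub_sub_cancel]

theorem StrictlyEquivalent.of_mul_eq_mul {M D T : Matrix ι ι R} (c : R) (hT : IsUnit T)
    (hMT : M * T = T * D) : StrictlyEquivalent M (c • M - 1) D (c • D - 1) := by
  have hinv : T⁻¹ * T = 1 := nonsing_inv_mul _ ((isUnit_iff_isUnit_det _).1 hT)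
  have hMD : T⁻¹ * M * T = D := by rw [Matrix.mul_assoc, hMT, ← Matrix.mul_assoc, hinv, one_mul]
  refine ⟨T⁻¹, T, isUnit_nonsing_inv_iff.2 hT, hT, hMD, ?_⟩
  rw [Matrix.mul_sub, Matrix.sub_mul, mul_smul_comm, smul_mul_assoc, hMD, mul_one, hinv]

theorem strictlyEquivalent_blockDiagFin {n₁ n₂ n : ℕ} (h : n₁ + n₂ = n) (c : R)
    {M₁ : Matrix (Fin n₁) (Fin n₁) R} {M₂ : Matrix (Fin n₂) (Fin n₂) R}
    (hM₁ : IsUnit M₁) (hM₂ : IsNilpotent M₂) :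
    ∃ (J : Matrix (Fin n₁) (Fin n₁) R) (N : Matrix (Fin n₂) (Fin n₂) R), IsNilpotent N ∧
      StrictlyEquivalent (blockDiagFin h M₁ M₂) (c • blockDiagFin h M₁ M₂ - 1)
        (blockDiagFin h 1 N) (blockDiagFin h J 1) := by
  obtain ⟨K, hK⟩ := (hM₂.smul c).isUnit_sub_one
  have hcomm : Commute (↑K⁻¹ : Matrix (Fin n₂) (Fin n₂) R) M₂ := by
    refine Commute.units_inv_left ?_
    rw [hK]
    exact ((Commute.refl M₂).smul_left c).sub_left (Commute.one_left M₂)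
  refine ⟨M₁⁻¹ * (c • M₁ - 1), (↑K⁻¹ : Matrix (Fin n₂) (Fin n₂) R) * M₂,
    hcomm.isNilpotent_mul_left hM₂, blockDiagFin h M₁⁻¹ ↑K⁻¹, 1,
    isUnit_blockDiagFin h (isUnit_nonsing_inv_iff.2 hM₁) K⁻¹.isUnit, isUnit_one, ?_, ?_⟩
  · rw [mul_one, blockDiagFin_mul, nonsing_inv_mul _ ((isUnit_iff_isUnit_det M₁).1 hM₁)]
  · rw [mul_one, smul_blockDiagFin, ← blockDiagFin_one h, blockDiagFin_sub, blockDiagFin_mul, ← hK,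
      Units.inv_mul]

end StrictlyEquivalent

end Matrix

theorem isRegularPair_blockDiagFin {n₁ n₂ n : ℕ} (h : n₁ + n₂ = n)
    (J : Matrix (Fin n₁) (Fin n₁) ℝ) {N : Matrix (Fin n₂) (Fin n₂) ℝ} (hN : IsNilpotent N) :
    IsRegularPair (blockDiagFin h 1 N) (blockDiagFin h J 1) := by
  obtain ⟨s, hs⟩ : ∃ s, J.charpoly.eval s ≠ 0 := by
    by_contra! h0
    exact J.charpoly_monic.ne_zero (Polynomial.funext (by simpa using h0))
  refine ⟨s, ?_⟩
  rw [smul_blockDiagFin, blockDiagFin_sub, det_blockDiagFin]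
  refine mul_ne_zero ?_ ((isUnit_iff_isUnit_det _).1 (hN.smul s).isUnit_sub_one).ne_zero
  rwa [eval_charpoly, scalar_apply, ← smul_one_eq_diagonal] at hs

/-- Quasi-Weierstraß form theorem. -/
theorem quasi_weierstrass_form {n : ℕ} (E A : Matrix (Fin n) (Fin n) ℝ) :
    IsRegularPair E A ↔
      ∃ (n₁ n₂ : ℕ) (h : n₁ + n₂ = n)
        (S T : Matrix (Fin n) (Fin n) ℝ)
        (J : Matrix (Fin n₁) (Fin n₁) ℝ) (N : Matrix (Fin n₂) (Fin n₂) ℝ),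
        IsUnit S ∧ IsUnit T ∧ IsNilpotent N ∧
        S * E * T =
          Matrix.reindex (finSumFinEquiv.trans (finCongr h)) (finSumFinEquiv.trans (finCongr h))
            (Matrix.fromBlocks 1 0 0 N) ∧
        S * A * T =
          Matrix.reindex (finSumFinEquiv.trans (finCongr h)) (finSumFinEquiv.trans (finCongr h))
            (Matrix.fromBlocks J 0 0 1) := by
  constructor
  · rintro ⟨c, hc⟩
    have hQ : IsUnit (c • E - A) := (isUnit_iff_isUnit_det _).2 (isUnit_iff_ne_zero.2 hc)
    obtain ⟨n₁, n₂, h, T, M₁, M₂, hT, hM₁, hM₂, hMT⟩ :=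
      exists_isUnit_mul_eq_mul_blockDiagFin ((c • E - A)⁻¹ * E)
    obtain ⟨J, N, hN, hblock⟩ := strictlyEquivalent_blockDiagFin h c hM₁ hM₂
    obtain ⟨S, T, hS, hT, hE, hA⟩ :=
      ((strictlyEquivalent_inv_mul c hQ).trans (.of_mul_eq_mul c hT hMT)).trans hblock
    exact ⟨n₁, n₂, h, S, T, J, N, hS, hT, hN, hE, hA⟩
  · rintro ⟨n₁, n₂, h, S, T, J, N, hS, hT, hN, hE, hA⟩
    obtain ⟨s, hs⟩ := isRegularPair_blockDiagFin h J hN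
    exact ⟨s, StrictlyEquivalent.det_smul_sub_ne_zero ⟨S, T, hS, hT, hE, hA⟩ hs⟩
end

section
/- Let A ∈ ℝ^{n×n}, B ∈ ℝ^{n×m}, and τ > 0. Then the smallest A-invariant subspace containing the image of B equals the span of the vectors e^{tA}·B·x over all t ∈ [0, τ] and all x ∈ ℝ^m; that is, ⟨A | im(B)⟩ = span{ e^{tA} B x : t ∈ [0, τ], x ∈ ℝ^m }. -/
/-! Both sides are the smallest `A`-invariant subspace containing `im B`. The span `S` of the
curves `t ↦ e^{tA} B x` contains `im B` (take `t = 0`), and it is `A`-invariant because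
`A e^{tA} B x` is the derivative of such a curve and `S` is closed. Conversely `⟨A | im B⟩` is
`A`-invariant by Cayley–Hamilton, hence, being closed, invariant under every `e^{tA}`. -/

open Matrix NormedSpace

/-- `⟨A | L⟩ := L + A·L + … + A^{n-1}·L`, the smallest `A`-invariant subspace
containing `L`. -/
def smallestInvariant {n : ℕ} (A : Matrix (Fin n) (Fin n) ℝ)
    (L : Submodule ℝ (Fin n → ℝ)) : Submodule ℝ (Fin n → ℝ) :=
  ⨆ i : Fin n, Submodule.map (A ^ (i : ℕ)).mulVecLin L

open Module.End Polynomial Set Submodule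

namespace Matrix

variable {ι R : Type*} [Fintype ι] [DecidableEq ι]

theorem pow_mem_span_pow_lt_card [CommRing R] [Nontrivial R] (A : Matrix ι ι R) (k : ℕ) :
    A ^ k ∈ span R ((A ^ ·) '' Iio (Fintype.card ι)) := by
  cases isEmpty_or_nonempty ι
  · simp [Subsingleton.elim (A ^ k) 0]
  have hdeg : (X ^ k %ₘ A.charpoly).natDegree < Fintype.card ι := by
    refine A.charpoly_natDegree_eq_dim ▸ natDegree_modByMonic_lt _ A.charpoly_monic fun h => ?_
    exact Fintype.card_ne_zero (α := ι) (by simpa [h] using A.charpoly_natDegree_eq_dim.symm)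
  rw [pow_eq_aeval_mod_charpoly, aeval_eq_sum_range' hdeg]
  exact sum_mem fun i hi => smul_mem _ _ (subset_span ⟨i, Finset.mem_range.1 hi, rfl⟩)

def invtSubalgebra [CommSemiring R] (K : Submodule R (ι → R)) : Subalgebra R (Matrix ι ι R) where
  carrier := {M | K ∈ invtSubmodule M.mulVecLin}
  mul_mem' {M N} hM hN v hv := by
    simpa [← mulVec_mulVec] using hM (hN hv)
  add_mem' {M N} hM hN v hv := by
    simpa [add_mulVec] using K.add_mem (hM hv) (hN hv)
  algebraMap_mem' r v hv := by
    simpa [Algebra.algebraMap_eq_smul_one, smul_mulVec] using K.smul_mem r hv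

theorem isClosed_invtSubalgebra [CommSemiring R] [TopologicalSpace R] [IsTopologicalSemiring R]
    {K : Submodule R (ι → R)} (hK : IsClosed (K : Set (ι → R))) :
    IsClosed (invtSubalgebra K : Set (Matrix ι ι R)) := by
  have : (invtSubalgebra K : Set (Matrix ι ι R)) = ⋂ v ∈ K, (· *ᵥ v) ⁻¹' K := by
    ext M
    simp [invtSubalgebra, mem_invtSubmodule_iff_forall_mem_of_mem]
  rw [this]
  exact isClosed_biInter fun v _ => hK.preimage (continuous_id.matrix_mulVec continuous_const)

theorem exp_smul_mem_invtSubmodule {A : Matrix ι ι ℝ} {K : Submodule ℝ (ι → ℝ)}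
    (hK : K ∈ invtSubmodule A.mulVecLin) (t : ℝ) :
    K ∈ invtSubmodule (exp (t • A)).mulVecLin :=
  exp_mem (isClosed_invtSubalgebra K.closed_of_finiteDimensional)
    (Subalgebra.smul_mem (invtSubalgebra K) hK t)

section
attribute [local instance] Matrix.linftyOpNormedRing Matrix.linftyOpNormedAlgebra

theorem hasDerivAt_exp_smul_mulVec (A : Matrix ι ι ℝ) (w : ι → ℝ) (t : ℝ) :
    HasDerivAt (fun u : ℝ => exp (u • A) *ᵥ w) (A *ᵥ (exp (t • A) *ᵥ w)) t := by
  let evalAt : Matrix ι ι ℝ →L[ℝ] ι → ℝ :=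
    LinearMap.toContinuousLinearMap ((LinearMap.applyₗ w).comp toLin'.toLinearMap)
  rw [mulVec_mulVec]
  exact evalAt.hasFDerivAt.comp_hasDerivAt t (hasDerivAt_exp_smul_const' A t)

end

/-- `A e^{tA} w` is the derivative of the curve `u ↦ e^{uA} w`, so it lies in the closed span
of the curve. -/
theorem mulVec_exp_smul_mulVec_mem {A : Matrix ι ι ℝ} {K : Submodule ℝ (ι → ℝ)} {s : Set ℝ}
    (hs : UniqueDiffOn ℝ s) {w : ι → ℝ} (hw : ∀ u ∈ s, exp (u • A) *ᵥ w ∈ K) {t : ℝ}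
    (ht : t ∈ s) : A *ᵥ (exp (t • A) *ᵥ w) ∈ K := by
  have hderiv := ((hasDerivAt_exp_smul_mulVec A w t).hasDerivWithinAt (s := s)).derivWithin
    (hs t ht)
  have hmem := range_derivWithin_subset_closure_span_image (fun u => exp (u • A) *ᵥ w)
    (s := s) (t := s) (by simpa using subset_closure) ⟨t, hderiv⟩
  exact K.closed_of_finiteDimensional.closure_subset_iff.2
    (span_le.2 (image_subset_iff.2 hw)) hmem

end Matrix

section smallestInvariant

variable {n : ℕ} {A : Matrix (Fin n) (Fin n) ℝ} {L : Submodule ℝ (Fin n → ℝ)}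

theorem pow_mulVec_mem_smallestInvariant {w : Fin n → ℝ} (hw : w ∈ L) (k : ℕ) :
    A ^ k *ᵥ w ∈ smallestInvariant A L := by
  let evalAt : Matrix (Fin n) (Fin n) ℝ →ₗ[ℝ] Fin n → ℝ :=
    (LinearMap.applyₗ w).comp toLin'.toLinearMap
  have hspan : A ^ k *ᵥ w ∈ span ℝ (evalAt '' ((A ^ ·) '' Iio (Fintype.card (Fin n)))) :=
    apply_mem_span_image_of_mem_span evalAt (A.pow_mem_span_pow_lt_card k)
  refine span_le.2 ?_ hspan
  rintro - ⟨-, ⟨i, hi, rfl⟩, rfl⟩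
  exact le_iSup (fun i : Fin n => map (A ^ (i : ℕ)).mulVecLin L) ⟨i, by simpa using hi⟩
    ⟨w, hw, rfl⟩

theorem le_smallestInvariant : L ≤ smallestInvariant A L := fun w hw => by
  simpa using pow_mulVec_mem_smallestInvariant (A := A) hw 0

theorem smallestInvariant_mem_invtSubmodule :
    smallestInvariant A L ∈ invtSubmodule A.mulVecLin := by
  refine (mem_invtSubmodule_iff_map_le _).2 ?_
  conv_lhs => rw [smallestInvariant, Submodule.map_iSup]
  refine iSup_le fun i => ?_
  rintro - ⟨-, ⟨w, hw, rfl⟩, rfl⟩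
  simpa [mulVec_mulVec, ← pow_succ'] using pow_mulVec_mem_smallestInvariant hw (i + 1)

theorem smallestInvariant_le {K : Submodule ℝ (Fin n → ℝ)} (hL : L ≤ K)
    (hK : K ∈ invtSubmodule A.mulVecLin) : smallestInvariant A L ≤ K := by
  refine iSup_le fun i => ?_
  rintro - ⟨w, hw, rfl⟩
  induction (i : ℕ) with
  | zero => simpa using hL hw
  | succ k ih => simpa [pow_succ', ← mulVec_mulVec] using hK ih

end smallestInvariant

/-- `⟨A | im B⟩ = span { e^{tA} B x : t ∈ [0, τ], x ∈ ℝ^m }` for any `τ > 0`. -/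
theorem smallestInvariant_eq_span_exp {n m : ℕ} (A : Matrix (Fin n) (Fin n) ℝ)
    (B : Matrix (Fin n) (Fin m) ℝ) (τ : ℝ) (hτ : 0 < τ) :
    smallestInvariant A (LinearMap.range B.mulVecLin) =
      Submodule.span ℝ
        {v : Fin n → ℝ | ∃ t ∈ Set.Icc (0 : ℝ) τ, ∃ x : Fin m → ℝ,
          v = (exp (t • A)).mulVec (B.mulVec x)} := by
  set S := span ℝ {v : Fin n → ℝ | ∃ t ∈ Icc (0 : ℝ) τ, ∃ x : Fin m → ℝ,
    v = (exp (t • A)).mulVec (B.mulVec x)}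
  have hgen : ∀ t ∈ Icc (0 : ℝ) τ, ∀ x, exp (t • A) *ᵥ (B *ᵥ x) ∈ S :=
    fun t ht x => subset_span ⟨t, ht, x, rfl⟩
  refine le_antisymm (smallestInvariant_le ?_ ?_) (span_le.2 ?_)
  · rintro - ⟨x, rfl⟩
    simpa using hgen 0 ⟨le_rfl, hτ.le⟩ x
  · refine span_le.2 ?_
    rintro - ⟨t, ht, x, rfl⟩
    exact mulVec_exp_smul_mulVec_mem (uniqueDiffOn_Icc hτ) (fun u hu => hgen u hu x) ht
  · rintro - ⟨t, -, x, rfl⟩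
    exact exp_smul_mem_invtSubmodule smallestInvariant_mem_invtSubmodule t
      (le_smallestInvariant ⟨x, rfl⟩)
end
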